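/- Let Γ = (V,E) be a finite simple graph with equivalence v ∼ w defined by mutual domination of neighbourhoods (v ≺ w and w ≺ v where v ≺ w ⟺ Ω'(v) ⊆ Ω(w)). Then for vertices v, w with v ≠ w, v ∼ w if and only if the transposition swapping v and w is a graph automorphism of Γ. -/
import Mathlib


/-- `v ≺ w` iff the open neighbourhood of `v` is contained in the closed
neighbourhood of `w`. -/
def nbhdPre {V : Type*} (G : SimpleGraph V) (v w : V) : Prop :=
  ∀ u, G.Adj v u → (G.Adj w u ∨ u = w)

/-- The vertex equivalence `v ∼ w` (mutual neighbourhood domination). -/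
def vertexSim {V : Type*} (G : SimpleGraph V) (v w : V) : Prop :=
  nbhdPre G v w ∧ nbhdPre G w v

/-- For distinct vertices `v ≠ w`, `v ∼ w` holds iff the transposition swapping
`v` and `w` is a graph automorphism of `Γ`. -/
theorem vertexSim_iff_swap_isAutomorphism (V : Type*) [Fintype V] [DecidableEq V]
    (G : SimpleGraph V) (v w : V) (hvw : v ≠ w) :
    vertexSim G v w ↔ ∀ x y : V, G.Adj (Equiv.swap v w x) (Equiv.swap v w y) ↔ G.Adj x y := by
  constructor
  · rintro ⟨h1, h2⟩
    have key : ∀ x y, G.Adj x y → G.Adj (Equiv.swap v w x) (Equiv.swap v w y) := by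
      intro x y hxy
      by_cases hxv : x = v <;> by_cases hxw : x = w <;> by_cases hyv : y = v <;>
        by_cases hyw : y = w <;> subst_vars <;>
        simp_all [Equiv.swap_apply_def, G.adj_symm] <;>
        first
        | exact (h1 _ hxy).resolve_right hyw
        | exact (h2 _ hxy).resolve_right hyv
        | exact ((h1 _ hxy.symm).resolve_right hxw).symm
        | exact ((h2 _ hxy.symm).resolve_right hxv).symm
    intro x y
    constructor
    · intro h
      have := key _ _ h
      simpa using this
    · exact key x y
  · intro hauto
    constructor <;> intro u hu
    · by_cases huw : u = w
      · exact Or.inr huw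
      · left
        have := (hauto v u).mpr hu
        rwa [Equiv.swap_apply_left, Equiv.swap_apply_of_ne_of_ne hu.ne' huw] at this
    · by_cases huv : u = v
      · exact Or.inr huv
      · left
        have := (hauto w u).mpr hu
        rwa [Equiv.swap_apply_right, Equiv.swap_apply_of_ne_of_ne huv hu.ne'] at this
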